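/- arXiv:2105.03064 — 3 statements merged into one kernel-verified Lean document; each statement's English description precedes it below -/
import Mathlib

section
/- If det P ≠ 0, then for every state S ⊆ [n], ∑_{i=1}^{n+1} μ_i·f([i:n],S) ≤ μ_p; that is, all the KKT multipliers σ_S = μ_p − ∑_{i=1}^{n+1} μ_i·f([i:n],S) are nonnegative. -/
open Finset
open Fin.NatCast

/-- The η×η shift-type block `D^{η−m}` over GF(2): entry (i,j) is 1 iff
`j < m` and `i = j + (η − m)`. -/
def Dblk (η m : ℕ) : Matrix (Fin η) (Fin η) (ZMod 2) :=
  Matrix.of fun i j => if (j : ℕ) < m ∧ (i : ℕ) = (j : ℕ) + (η - m) then 1 else 0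

/-- Row-block index set of the transfer matrix: `{d} ∪ (Ωᶜ ∩ Sᶜ)`, with `0`
playing the role of the destination `d` and relays being `1,…,n`. -/
def rowIdx (n : ℕ) (Ω S : Finset ℕ) : Finset ℕ :=
  insert 0 ((Finset.Icc 1 n \ Ω) \ S)

/-- Column-block index set of the transfer matrix: `{s} ∪ (Ω ∩ S)`, with `0`
playing the role of the source `s`. -/
def colIdx (Ω S : Finset ℕ) : Finset ℕ :=
  insert 0 (Ω ∩ S)

/-- `f(Ω,S)`: rank over GF(2) of the transfer matrix `F_{Ω,S}`, whose block in
row block `i` and column block `j` is `D^{η−ℓ i j}` (here `ℓ i j` encodes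
`ℓ_{i,j}`, with index `0` standing for `d` in the first slot and for `s` in the
second slot). -/
noncomputable def fRank (n η : ℕ) (ℓ : ℕ → ℕ → ℕ) (Ω S : Finset ℕ) : ℕ :=
  Matrix.rank
    (Matrix.of fun (p : ↥(rowIdx n Ω S) × Fin η) (q : ↥(colIdx Ω S) × Fin η) =>
      Dblk η (ℓ (p.1 : ℕ) (q.1 : ℕ)) p.2 q.2)

/-- The `(n+2) × (n+2)` real matrix `P`. -/
noncomputable def Pmat (n η : ℕ) (ℓ : ℕ → ℕ → ℕ) : Matrix (Fin (n+2)) (Fin (n+2)) ℝ :=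
  Matrix.of fun i j =>
    if (i : ℕ) = 0 then (if (j : ℕ) = 0 then 0 else 1)
    else if (j : ℕ) = 0 then 1
    else -(fRank n η ℓ (Finset.Icc (i : ℕ) n)
        (if (j : ℕ) = n + 1 then (∅ : Finset ℕ) else {(j : ℕ)}) : ℝ)

/-- `P̃_i`: determinant of the submatrix of `P` obtained by deleting row `0`
and column `i`. -/
noncomputable def Pminor (n η : ℕ) (ℓ : ℕ → ℕ → ℕ) (i : Fin (n+2)) : ℝ :=
  ((Pmat n η ℓ).submatrix Fin.succ i.succAbove).det

/-- Feasibility for the LP defining the approximate capacity `C^LD`. -/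
def FeasLD (n η : ℕ) (ℓ : ℕ → ℕ → ℕ) (t : ℝ) (lam : Finset ℕ → ℝ) : Prop :=
  (∀ S ⊆ Finset.Icc 1 n, 0 ≤ lam S) ∧
  (∑ S ∈ (Finset.Icc 1 n).powerset, lam S) ≤ 1 ∧
  ∀ Ω ⊆ Finset.Icc 1 n,
    t ≤ ∑ S ∈ (Finset.Icc 1 n).powerset, lam S * (fRank n η ℓ Ω S : ℝ)

/-- The approximate capacity `C^LD`. -/
noncomputable def CLD (n η : ℕ) (ℓ : ℕ → ℕ → ℕ) : ℝ :=
  sSup {t : ℝ | ∃ lam, FeasLD n η ℓ t lam}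

/-- Feasibility for the relaxed LP defining `C^U`. -/
def FeasU (n η : ℕ) (ℓ : ℕ → ℕ → ℕ) (t : ℝ) (lam : Finset ℕ → ℝ) : Prop :=
  (∀ S ⊆ Finset.Icc 1 n, 0 ≤ lam S) ∧
  (∑ S ∈ (Finset.Icc 1 n).powerset, lam S) ≤ 1 ∧
  ∀ i ∈ Finset.Icc 1 (n+1),
    t ≤ ∑ S ∈ (Finset.Icc 1 n).powerset, lam S * (fRank n η ℓ (Finset.Icc i n) S : ℝ)

/-- The relaxed value `C^U`. -/
noncomputable def CU (n η : ℕ) (ℓ : ℕ → ℕ → ℕ) : ℝ :=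
  sSup {t : ℝ | ∃ lam, FeasU n η ℓ t lam}

/-- The set `Ŝ = {∅, {1}, …, {n}}` of states with at most one relay transmitting. -/
def SHat (n : ℕ) : Finset (Finset ℕ) :=
  insert ∅ ((Finset.Icc 1 n).image fun i => {i})

/-- The schedule `λ*` induced by a solution vector `v = (t*, λ*_{{1}}, …, λ*_{{n}}, λ*_∅)`
of the linear system `P·v = e₀`: it assigns `v i` to the state `{i}` (for `i ∈ [n]`),
`v (n+1)` to `∅`, and `0` to any other state. -/
noncomputable def lamStar (n : ℕ) (v : Fin (n+2) → ℝ) (S : Finset ℕ) : ℝ :=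
  (if S = ∅ then v (Fin.last (n+1)) else 0) +
  ∑ i ∈ Finset.Icc 1 n, if S = {i} then v (i : Fin (n+2)) else 0

/-!
Since `det P ≠ 0`, `μ` is the only solution of `μ P = e₀`, so it suffices to exhibit one solution
with `μ_i ≥ 0` for `i ≥ 1`. For the cuts `[i:n]` and the states `∅`, `{j}` the ranks are explicit:
`f([i:n], ∅) = ℓ_{i-1,s}`; `f([i:n], {j})` equals it for `i ≥ j + 2` and is `ℓ_{j-1,s}` for
`i = j + 1`. Hence the equations "column `{j}` = column `∅`" form a Hessenberg system whose
entries on and above the diagonal are `≥ 0` (an extra column block cannot lower the rank) and whose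
subdiagonal entries `ℓ_{j-1,s} - ℓ_{j,s}` are `≤ 0`; it is solved by nonnegative weights, computed
one unknown at a time.

For fixed `Ω`, `f(Ω, ·)` is submodular: as `S` grows the rows of `F_{Ω,S}` shrink and its columns
grow, and the rank of such a submatrix is `dim (column span ⊔ K_R) - dim K_R`, where `K_R` is the
space of vectors vanishing on the rows `R`; the modular law for dimensions does the rest. So with
`μ_i ≥ 0` the map `S ↦ ∑ μ_i f([i:n], S)` is submodular, and it takes the value `μ_p` on `∅` and on
every singleton, hence is at most `μ_p` everywhere.
-/

namespace Matrix

variable {K α β ι κ : Type*} [Field K]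

def blockSubmatrix (M : α → β → Matrix ι κ K) (R : Finset α) (C : Finset β) :
    Matrix (R × ι) (C × κ) K :=
  of fun p q => M p.1 q.1 p.2 q.2

variable (M : α → β → Matrix ι κ K)

theorem rank_blockSubmatrix_mono_right [Fintype κ] (R : Finset α) {C C' : Finset β}
    (h : C ⊆ C') : (blockSubmatrix M R C).rank ≤ (blockSubmatrix M R C').rank :=
  rank_submatrix_le (blockSubmatrix M R C') id fun q : C × κ => ((⟨q.1, h q.1.2⟩ : C'), q.2)

namespace blockSubmatrix

variable (K ι) in
def vanishing (T R : Finset α) : Submodule K (T × ι → K) :=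
  Submodule.pi {p | (p.1 : α) ∈ R} fun _ => ⊥

variable (T : Finset α)

def colSpan (C : Finset β) : Submodule K (T × ι → K) :=
  Submodule.span K (⋃ b ∈ (C : Set β), Set.range fun c (p : T × ι) => M p.1 b p.2 c)

variable {M T}

theorem mem_vanishing {R : Finset α} {v : T × ι → K} :
    v ∈ vanishing K ι T R ↔ ∀ p : T × ι, (p.1 : α) ∈ R → v p = 0 := by
  simp [vanishing, Submodule.mem_pi]

theorem colSpan_union [DecidableEq β] (C C' : Finset β) :
    colSpan M T (C ∪ C') = colSpan M T C ⊔ colSpan M T C' := by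
  rw [colSpan, coe_union, Set.biUnion_union, Submodule.span_union]; rfl

theorem colSpan_mono {C C' : Finset β} (h : C ⊆ C') : colSpan M T C ≤ colSpan M T C' :=
  Submodule.span_mono (Set.biUnion_subset_biUnion_left (coe_subset.2 h))

theorem vanishing_anti {R R' : Finset α} (h : R ⊆ R') :
    vanishing K ι T R' ≤ vanishing K ι T R :=
  fun _ hv => mem_vanishing.2 fun p hp => mem_vanishing.1 hv p (h hp)

theorem vanishing_inter [DecidableEq α] (R R' : Finset α) :
    vanishing K ι T (R ∩ R') = vanishing K ι T R ⊔ vanishing K ι T R' := by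
  refine le_antisymm (fun v hv => ?_) (sup_le (vanishing_anti inter_subset_left)
    (vanishing_anti inter_subset_right))
  set u : T × ι → K := fun p => if (p.1 : α) ∈ R then 0 else v p
  have hu : u ∈ vanishing K ι T R := mem_vanishing.2 fun p hp => by simp [u, hp]
  have hvu : v - u ∈ vanishing K ι T R' := mem_vanishing.2 fun p hp => by
    by_cases h : (p.1 : α) ∈ R
    · simpa [u, h] using mem_vanishing.1 hv p (mem_inter.2 ⟨h, hp⟩)
    · simp [u, h]
  simpa using Submodule.add_mem_sup hu hvu

theorem vanishing_union [DecidableEq α] (R R' : Finset α) :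
    vanishing K ι T (R ∪ R') = vanishing K ι T R ⊓ vanishing K ι T R' := by
  ext v
  simp only [Submodule.mem_inf, mem_vanishing, mem_union, or_imp, forall_and]

theorem rank_add_finrank_vanishing [Fintype ι] [Fintype κ] {R : Finset α} (hR : R ⊆ T)
    (C : Finset β) :
    (blockSubmatrix M R C).rank + Module.finrank K (vanishing K ι T R)
      = Module.finrank K ↥(colSpan M T C ⊔ vanishing K ι T R) := by
  set π : (T × ι → K) →ₗ[K] (R × ι → K) :=
    LinearMap.funLeft K K fun p => (⟨p.1, hR p.1.2⟩, p.2)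
  have hker : LinearMap.ker π = vanishing K ι T R := by
    ext v
    simp only [LinearMap.mem_ker, funext_iff, π, LinearMap.funLeft_apply, Pi.zero_apply,
      mem_vanishing]
    exact ⟨fun h p hp => h (⟨p.1, hp⟩, p.2), fun h p => h _ p.1.2⟩
  have hcols : Set.range (blockSubmatrix M R C).col
      = ⋃ b ∈ (C : Set β), π '' Set.range fun c (p : T × ι) => M p.1 b p.2 c := by
    ext u
    simp only [Set.mem_range, Set.mem_iUnion, Set.mem_image, exists_exists_eq_and, Prod.exists,
      Subtype.exists, exists_prop, mem_coe]
    exact ⟨fun ⟨b, hb, c, h⟩ => ⟨b, hb, c, h⟩, fun ⟨b, hb, c, h⟩ => ⟨b, hb, c, h⟩⟩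
  have hrank :
      (blockSubmatrix M R C).rank = Module.finrank K (Submodule.map π (colSpan M T C)) := by
    rw [rank_eq_finrank_span_cols, colSpan, Submodule.map_span, Set.image_iUnion₂, hcols]
  set X := colSpan M T C ⊔ vanishing K ι T R
  have hmap : Submodule.map π X = Submodule.map π (colSpan M T C) := by
    rw [Submodule.map_sup, ← hker, LinearMap.le_ker_iff_map.1 le_rfl, sup_bot_eq]
  have hkerX : LinearMap.ker π ≤ X := hker ▸ le_sup_right
  have := LinearMap.finrank_range_add_finrank_ker (π.domRestrict X)
  rwa [LinearMap.range_domRestrict, hmap, ← hrank, LinearMap.ker_domRestrict,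
    (Submodule.comapSubtypeEquivOfLe hkerX).finrank_eq, hker] at this

end blockSubmatrix

open blockSubmatrix in
theorem rank_blockSubmatrix_inter_union_add_le [DecidableEq α] [DecidableEq β] [Fintype ι]
    [Fintype κ] (R R' : Finset α) (C C' : Finset β) :
    (blockSubmatrix M (R ∩ R') (C ∪ C')).rank + (blockSubmatrix M (R ∪ R') (C ∩ C')).rank
      ≤ (blockSubmatrix M R C).rank + (blockSubmatrix M R' C').rank := by
  have h₁ := rank_add_finrank_vanishing (M := M) (inter_subset_union : R ∩ R' ⊆ R ∪ R') (C ∪ C')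
  have h₂ := rank_add_finrank_vanishing (M := M) (subset_refl (R ∪ R')) (C ∩ C')
  have h₃ := rank_add_finrank_vanishing (M := M) (subset_union_left : R ⊆ R ∪ R') C
  have h₄ := rank_add_finrank_vanishing (M := M) (subset_union_right : R' ⊆ R ∪ R') C'
  set A := colSpan M (R ∪ R') C ⊔ vanishing K ι (R ∪ R') R
  set B := colSpan M (R ∪ R') C' ⊔ vanishing K ι (R ∪ R') R'
  have hsup : colSpan M (R ∪ R') (C ∪ C') ⊔ vanishing K ι (R ∪ R') (R ∩ R') = A ⊔ B := by
    rw [colSpan_union, vanishing_inter, sup_sup_sup_comm]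
  have hinf : colSpan M (R ∪ R') (C ∩ C') ⊔ vanishing K ι (R ∪ R') (R ∪ R') ≤ A ⊓ B :=
    le_inf (sup_le_sup (colSpan_mono inter_subset_left) (vanishing_anti subset_union_left))
      (sup_le_sup (colSpan_mono inter_subset_right) (vanishing_anti subset_union_right))
  have hAB := Submodule.finrank_sup_add_finrank_inf_eq A B
  have hK := Submodule.finrank_sup_add_finrank_inf_eq (vanishing K ι (R ∪ R') R)
    (vanishing K ι (R ∪ R') R')
  rw [← vanishing_inter, ← vanishing_union] at hK
  rw [hsup] at h₁
  have := Submodule.finrank_mono hinf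
  omega

end Matrix

open Matrix

theorem rank_blockSubmatrix_Dblk_singleton {α β : Type*} {η : ℕ} (ℓ : α → β → ℕ)
    {R : Finset α} {r : α} (b : β) (hr : r ∈ R) (hmax : ∀ x ∈ R, ℓ x b ≤ ℓ r b)
    (hη : ℓ r b ≤ η) :
    (blockSubmatrix (fun x y => Dblk η (ℓ x y)) R {b}).rank = ℓ r b := by
  set A := blockSubmatrix (fun x y => Dblk η (ℓ x y)) R {b}
  set m := ℓ r b
  let b₀ : ({b} : Finset β) := ⟨b, mem_singleton_self b⟩
  apply le_antisymm
  · -- the columns of index `≥ m` vanish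
    rw [← rank_transpose]
    refine (rank_le_card_of_support_subset Aᵀ (univ.image fun j : Fin m => (b₀, Fin.castLE hη j))
      fun q hq => ?_).trans (card_image_le.trans (by simp))
    have hqb : (q.1 : β) = b := mem_singleton.1 q.1.2
    have hq2 : (q.2 : ℕ) < m := by
      by_contra hge
      refine hq (funext fun p => if_neg ?_)
      rintro ⟨hlt, -⟩
      rw [hqb] at hlt
      exact hge (hlt.trans_le (hmax p.1 p.1.2))
    exact mem_image.2 ⟨⟨q.2, hq2⟩, mem_univ _, Prod.ext (Subtype.ext hqb.symm) rfl⟩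
  · -- rows `i + (η - m)` of the block of `r` and the first `m` columns form an identity matrix
    let rows : Fin m → R × Fin η := fun i => (⟨r, hr⟩, ⟨i + (η - m), by omega⟩)
    let cols : Fin m → ({b} : Finset β) × Fin η := fun j => (b₀, Fin.castLE hη j)
    have hid : A.submatrix rows cols = 1 := by
      ext i j
      simp [A, rows, cols, b₀, blockSubmatrix, Dblk, one_apply, m, Fin.ext_iff]
    simpa [hid] using rank_submatrix_le A rows cols

theorem exists_nonneg_hessenberg_solution (n : ℕ) (N : ℕ → ℕ → ℝ)
    (hN : ∀ k j, 1 ≤ k → k ≤ j → j ≤ n → 0 ≤ N k j)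
    (hsub : ∀ j, 1 ≤ j → j ≤ n → N (j + 1) j ≤ 0) :
    ∃ w : ℕ → ℝ, (∀ i ∈ Icc 1 (n + 1), 0 ≤ w i) ∧ 0 < ∑ i ∈ Icc 1 (n + 1), w i ∧
      ∀ j ∈ Icc 1 n, ∑ k ∈ Icc 1 (j + 1), w k * N k j = 0 := by
  induction n with
  | zero => exact ⟨fun _ => 1, by simp, by simp, by simp⟩
  | succ n ih =>
    obtain ⟨w, hw, hpos, hbal⟩ := ih (fun k j hk hkj hj => hN k j hk hkj (by omega))
      (fun j hj hjn => hsub j hj (by omega))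
    have hsub' := hsub (n + 1) (by omega) le_rfl
    rcases hsub'.eq_or_lt with hzero | hneg
    · -- a vanishing subdiagonal entry decouples the last unknown
      refine ⟨fun i => if i = n + 2 then 1 else 0, fun i _ => by positivity, ?_, fun j hj => ?_⟩
      · rw [sum_ite_eq' (Icc 1 (n + 1 + 1))]; simp
      · simp only [ite_mul, one_mul, zero_mul, sum_ite_eq', mem_Icc]
        rw [mem_Icc] at hj
        split_ifs with h
        · rw [show j = n + 1 by omega, hzero]
        · rfl
    · set c := ∑ k ∈ Icc 1 (n + 1), w k * N k (n + 1)
      have hc : 0 ≤ c := sum_nonneg fun k hk => mul_nonneg (hw k hk)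
        (hN k (n + 1) (mem_Icc.1 hk).1 (mem_Icc.1 hk).2 le_rfl)
      set v := c / -N (n + 2) (n + 1)
      have hv : 0 ≤ v := div_nonneg hc (neg_nonneg.2 hsub')
      set w' := Function.update w (n + 2) v
      have hw'_top : w' (n + 2) = v := Function.update_self _ _ _
      have hw' : ∀ k ∈ Icc 1 (n + 1), w' k = w k := fun k hk =>
        Function.update_of_ne (by rw [mem_Icc] at hk; omega) _ _
      refine ⟨w', fun i hi => ?_, ?_, fun j hj => ?_⟩
      · rw [mem_Icc] at hi
        rcases hi.2.lt_or_eq with hlt | rfl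
        · rw [hw' i (mem_Icc.2 ⟨hi.1, by omega⟩)]; exact hw i (mem_Icc.2 ⟨hi.1, by omega⟩)
        · rwa [hw'_top]
      · rw [sum_Icc_succ_top (by omega), sum_congr rfl hw', hw'_top]
        exact add_pos_of_pos_of_nonneg hpos hv
      · rw [mem_Icc] at hj
        rcases hj.2.lt_or_eq with hlt | rfl
        · rw [sum_congr rfl fun k hk => by rw [hw' k (mem_Icc.2 ⟨(mem_Icc.1 hk).1, by
            rw [mem_Icc] at hk; omega⟩)]]
          exact hbal j (mem_Icc.2 ⟨hj.1, by omega⟩)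
        · rw [sum_Icc_succ_top (by omega), sum_congr rfl fun k hk => by rw [hw' k hk], hw'_top]
          rw [div_mul_eq_mul_div, div_neg, mul_div_cancel_right₀ _ hneg.ne]
          exact add_neg_cancel c

section Network

variable {n η : ℕ} {ℓ : ℕ → ℕ → ℕ}

theorem fRank_eq_rank_blockSubmatrix (Ω S : Finset ℕ) :
    fRank n η ℓ Ω S
      = (blockSubmatrix (fun x y => Dblk η (ℓ x y)) (rowIdx n Ω S) (colIdx Ω S)).rank := rfl

theorem fRank_union_add_inter_le (Ω S S' : Finset ℕ) :
    fRank n η ℓ Ω (S ∪ S') + fRank n η ℓ Ω (S ∩ S') ≤ fRank n η ℓ Ω S + fRank n η ℓ Ω S' := by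
  have hR : rowIdx n Ω (S ∪ S') = rowIdx n Ω S ∩ rowIdx n Ω S' := by
    ext x; simp only [rowIdx, mem_insert, mem_sdiff, mem_inter, mem_union]; tauto
  have hR' : rowIdx n Ω (S ∩ S') = rowIdx n Ω S ∪ rowIdx n Ω S' := by
    ext x; simp only [rowIdx, mem_insert, mem_sdiff, mem_inter, mem_union]; tauto
  have hC : colIdx Ω (S ∪ S') = colIdx Ω S ∪ colIdx Ω S' := by
    ext x; simp only [colIdx, mem_insert, mem_inter, mem_union]; tauto
  have hC' : colIdx Ω (S ∩ S') = colIdx Ω S ∩ colIdx Ω S' := by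
    ext x; simp only [colIdx, mem_insert, mem_inter]; tauto
  have := rank_blockSubmatrix_inter_union_add_le (fun x y => Dblk η (ℓ x y)) (rowIdx n Ω S)
    (rowIdx n Ω S') (colIdx Ω S) (colIdx Ω S')
  rwa [← hR, ← hR', ← hC, ← hC'] at this

theorem mem_rowIdx_Icc {i x : ℕ} {S : Finset ℕ} :
    x ∈ rowIdx n (Icc i n) S ↔ x = 0 ∨ (1 ≤ x ∧ x < i ∧ x ≤ n) ∧ x ∉ S := by
  have : ((1 ≤ x ∧ x ≤ n) ∧ ¬(i ≤ x ∧ x ≤ n)) ↔ (1 ≤ x ∧ x < i ∧ x ≤ n) := by omega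
  simp only [rowIdx, mem_insert, mem_sdiff, mem_Icc, this]

theorem fRank_Icc_empty_le_singleton {i j : ℕ} (hij : i ≤ j) :
    fRank n η ℓ (Icc i n) ∅ ≤ fRank n η ℓ (Icc i n) {j} := by
  have hR : rowIdx n (Icc i n) ∅ = rowIdx n (Icc i n) {j} := by
    ext x
    simp only [mem_rowIdx_Icc, notMem_empty, mem_singleton, not_false_eq_true, and_true]
    omega
  rw [fRank_eq_rank_blockSubmatrix, fRank_eq_rank_blockSubmatrix, hR]
  exact rank_blockSubmatrix_mono_right _ _
    (insert_subset_insert _ (inter_subset_inter_left (empty_subset _)))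

variable (hds : ℓ 0 0 = 0) (hmono : ∀ i j, 1 ≤ i → i ≤ j → j ≤ n → ℓ i 0 ≤ ℓ j 0)
include hds hmono

theorem source_gain_le_of_le {x r : ℕ} (hxr : x ≤ r) (hrn : r ≤ n) : ℓ x 0 ≤ ℓ r 0 := by
  rcases Nat.eq_zero_or_pos x with rfl | hx
  · simp [hds]
  · exact hmono x r hx hxr hrn

variable (hbound : ∀ i ≤ n, ∀ j ≤ n, ℓ i j ≤ η)
include hbound

theorem fRank_Icc_eq_of_forall_le {i r : ℕ} {S : Finset ℕ} (hS : ∀ s ∈ S, s < i)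
    (hr : r ∈ rowIdx n (Icc i n) S) (hle : ∀ x ∈ rowIdx n (Icc i n) S, x ≤ r) :
    fRank n η ℓ (Icc i n) S = ℓ r 0 := by
  have hC : colIdx (Icc i n) S = {0} := by
    ext x
    simp only [colIdx, mem_insert, mem_inter, mem_Icc, mem_singleton]
    refine ⟨?_, Or.inl⟩
    rintro (h | ⟨⟨hix, -⟩, hxS⟩)
    · exact h
    · exact absurd (hS x hxS) (by omega)
  have hrn : r ≤ n := by rw [mem_rowIdx_Icc] at hr; omega
  rw [fRank_eq_rank_blockSubmatrix, hC]
  exact rank_blockSubmatrix_Dblk_singleton ℓ 0 hr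
    (fun x hx => source_gain_le_of_le hds hmono (hle x hx) hrn) (hbound r hrn 0 (by omega))

theorem fRank_Icc_empty {i : ℕ} (hi : 1 ≤ i) (hin : i ≤ n + 1) :
    fRank n η ℓ (Icc i n) ∅ = ℓ (i - 1) 0 := by
  refine fRank_Icc_eq_of_forall_le hds hmono hbound (by simp) (mem_rowIdx_Icc.2 ?_) fun x hx => ?_
  · simp only [notMem_empty, not_false_eq_true, and_true]; omega
  · simp only [mem_rowIdx_Icc, notMem_empty, not_false_eq_true, and_true] at hx; omega

theorem fRank_Icc_singleton_of_add_two_le {i j : ℕ} (hj : 1 ≤ j) (hji : j + 2 ≤ i)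
    (hin : i ≤ n + 1) : fRank n η ℓ (Icc i n) {j} = ℓ (i - 1) 0 := by
  refine fRank_Icc_eq_of_forall_le hds hmono hbound (by simp; omega) (mem_rowIdx_Icc.2 ?_)
    fun x hx => ?_
  · simp only [mem_singleton]; omega
  · simp only [mem_rowIdx_Icc, mem_singleton] at hx; omega

theorem fRank_Icc_succ_singleton {j : ℕ} (hj : 1 ≤ j) (hjn : j ≤ n) :
    fRank n η ℓ (Icc (j + 1) n) {j} = ℓ (j - 1) 0 := by
  refine fRank_Icc_eq_of_forall_le hds hmono hbound (by simp) (mem_rowIdx_Icc.2 ?_) fun x hx => ?_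
  · simp only [mem_singleton]; omega
  · simp only [mem_rowIdx_Icc, mem_singleton] at hx; omega

end Network

theorem le_apply_empty_of_submodular {α M : Type*} [DecidableEq α] [AddCommGroup M]
    [PartialOrder M] [IsOrderedAddMonoid M] {g : Finset α → M}
    (hg : ∀ S T, g (S ∪ T) + g (S ∩ T) ≤ g S + g T) {U : Finset α}
    (hU : ∀ a ∈ U, g {a} ≤ g ∅) {S : Finset α} (hS : S ⊆ U) : g S ≤ g ∅ := by
  induction S using Finset.induction_on with
  | empty => exact le_rfl
  | insert a S ha ih =>
    have h := hg {a} S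
    rw [← insert_eq, singleton_inter_of_notMem ha] at h
    have := add_le_add (hU a (hS (mem_insert_self a S))) (ih ((subset_insert a S).trans hS))
    exact le_of_add_le_add_right (h.trans this)

theorem sum_mul_fRank_union_add_inter_le {n η : ℕ} {ℓ : ℕ → ℕ → ℕ} (I : Finset ℕ)
    (Ω : ℕ → Finset ℕ) {w : ℕ → ℝ} (hw : ∀ i ∈ I, 0 ≤ w i) (S T : Finset ℕ) :
    ∑ i ∈ I, w i * (fRank n η ℓ (Ω i) (S ∪ T) : ℝ) + ∑ i ∈ I, w i * (fRank n η ℓ (Ω i) (S ∩ T) : ℝ)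
      ≤ ∑ i ∈ I, w i * (fRank n η ℓ (Ω i) S : ℝ) + ∑ i ∈ I, w i * (fRank n η ℓ (Ω i) T : ℝ) := by
  simp only [← sum_add_distrib, ← mul_add]
  refine sum_le_sum fun i hi => mul_le_mul_of_nonneg_left ?_ (hw i hi)
  exact_mod_cast fRank_union_add_inter_le (Ω i) S T

section Dual

variable {n η : ℕ} {ℓ : ℕ → ℕ → ℕ}

theorem sum_univ_fin_eq_add_sum_Icc {M : Type*} [AddCommMonoid M] (G : Fin (n + 2) → M) :
    ∑ k, G k = G 0 + ∑ i ∈ Icc 1 (n + 1), G i := by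
  have hrange : range (n + 2) = insert 0 (Icc 1 (n + 1)) := by ext x; simp; omega
  calc ∑ k, G k = ∑ k : Fin (n + 2), G ((k : ℕ) : Fin (n + 2)) := by
        simp only [Fin.cast_val_eq_self]
    _ = G 0 + ∑ i ∈ Icc 1 (n + 1), G i := by
        rw [Fin.sum_univ_eq_sum_range (fun i => G i), hrange, sum_insert (by simp), Nat.cast_zero]

theorem vecMul_Pmat_apply (ν : Fin (n + 2) → ℝ) (k : Fin (n + 2)) :
    vecMul ν (Pmat n η ℓ) k = if (k : ℕ) = 0 then ∑ i ∈ Icc 1 (n + 1), ν i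
      else ν 0 - ∑ i ∈ Icc 1 (n + 1),
        ν i * (fRank n η ℓ (Icc i n) (if (k : ℕ) = n + 1 then ∅ else {(k : ℕ)}) : ℝ) := by
  have hval : ∀ i ∈ Icc 1 (n + 1), ((i : Fin (n + 2)) : ℕ) = i := fun i hi =>
    Fin.val_cast_of_lt (by rw [mem_Icc] at hi; omega)
  rw [vecMul, dotProduct, sum_univ_fin_eq_add_sum_Icc]
  have hrow : ∀ i ∈ Icc 1 (n + 1), Pmat n η ℓ i k = if (k : ℕ) = 0 then 1 else
      -(fRank n η ℓ (Icc i n) (if (k : ℕ) = n + 1 then ∅ else {(k : ℕ)}) : ℝ) := fun i hi => by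
    have hi0 : i ≠ 0 := by rw [mem_Icc] at hi; omega
    simp only [Pmat, of_apply, hval i hi, if_neg hi0]
  have hrow₀ : Pmat n η ℓ 0 k = if (k : ℕ) = 0 then 0 else 1 := by
    simp only [Pmat, of_apply, Fin.val_zero, if_true]
  rw [sum_congr rfl fun i hi => by rw [hrow i hi], hrow₀]
  split_ifs <;> simp only [mul_zero, mul_one, zero_add, mul_neg, sum_neg_distrib, sub_eq_add_neg]

theorem vecMul_Pmat_eq_iff (ν : Fin (n + 2) → ℝ) :
    vecMul ν (Pmat n η ℓ) = (fun k => if k = 0 then 1 else 0) ↔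
      ∑ i ∈ Icc 1 (n + 1), ν i = 1 ∧
      ∑ i ∈ Icc 1 (n + 1), ν i * (fRank n η ℓ (Icc i n) ∅ : ℝ) = ν 0 ∧
      ∀ j ∈ Icc 1 n, ∑ i ∈ Icc 1 (n + 1), ν i * (fRank n η ℓ (Icc i n) {j} : ℝ) = ν 0 := by
  have hcols : (∀ j ∈ Icc 1 (n + 1), ∑ i ∈ Icc 1 (n + 1),
      ν i * (fRank n η ℓ (Icc i n) (if j = n + 1 then ∅ else {j}) : ℝ) = ν 0) ↔
      ∑ i ∈ Icc 1 (n + 1), ν i * (fRank n η ℓ (Icc i n) ∅ : ℝ) = ν 0 ∧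
      ∀ j ∈ Icc 1 n, ∑ i ∈ Icc 1 (n + 1), ν i * (fRank n η ℓ (Icc i n) {j} : ℝ) = ν 0 := by
    rw [← insert_Icc_right_eq_Icc_add_one (by omega), forall_mem_insert, if_pos rfl]
    refine and_congr_right' (forall₂_congr fun j hj => ?_)
    rw [if_neg (by rw [mem_Icc] at hj; omega)]
  rw [← hcols, funext_iff]
  simp only [vecMul_Pmat_apply]
  constructor
  · intro h
    refine ⟨by simpa using h 0, fun j hj => ?_⟩
    have hj' : ((j : Fin (n + 2)) : ℕ) = j := Fin.val_cast_of_lt (by rw [mem_Icc] at hj; omega)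
    have hj0 : j ≠ 0 := by rw [mem_Icc] at hj; omega
    have hjF : (j : Fin (n + 2)) ≠ 0 := fun h => hj0 (by rw [← hj', h, Fin.val_zero])
    have := h j
    rw [hj', if_neg hj0, if_neg hjF] at this
    linarith
  · rintro ⟨hsum, hcol⟩ k
    by_cases hk : (k : ℕ) = 0
    · rw [if_pos hk, if_pos (Fin.ext hk), hsum]
    · have hkF : k ≠ 0 := fun h => hk (by rw [h, Fin.val_zero])
      rw [if_neg hk, if_neg hkF, hcol k (mem_Icc.2 ⟨by omega, by omega⟩), sub_self]

variable (hds : ℓ 0 0 = 0) (hmono : ∀ i j, 1 ≤ i → i ≤ j → j ≤ n → ℓ i 0 ≤ ℓ j 0)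
  (hbound : ∀ i ≤ n, ∀ j ≤ n, ℓ i j ≤ η)
include hds hmono hbound

theorem exists_nonneg_weights_fRank_singleton_eq_empty :
    ∃ w : ℕ → ℝ, (∀ i ∈ Icc 1 (n + 1), 0 ≤ w i) ∧ 0 < ∑ i ∈ Icc 1 (n + 1), w i ∧
      ∀ j ∈ Icc 1 n, ∑ i ∈ Icc 1 (n + 1), w i * (fRank n η ℓ (Icc i n) {j} : ℝ)
        = ∑ i ∈ Icc 1 (n + 1), w i * (fRank n η ℓ (Icc i n) ∅ : ℝ) := by
  set N : ℕ → ℕ → ℝ := fun k j => (fRank n η ℓ (Icc k n) {j} : ℝ) - fRank n η ℓ (Icc k n) ∅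
  obtain ⟨w, hw, hpos, hbal⟩ := exists_nonneg_hessenberg_solution n N
    (fun k j _ hkj _ => sub_nonneg.2 (by exact_mod_cast fRank_Icc_empty_le_singleton hkj))
    (fun j hj hjn => by
      simp only [N, fRank_Icc_succ_singleton hds hmono hbound hj hjn,
        fRank_Icc_empty hds hmono hbound (by omega : 1 ≤ j + 1) (by omega), Nat.add_sub_cancel,
        sub_nonpos, Nat.cast_le]
      exact source_gain_le_of_le hds hmono (Nat.sub_le j 1) hjn)
  refine ⟨w, hw, hpos, fun j hj => ?_⟩
  rw [mem_Icc] at hj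
  rw [← sub_eq_zero, ← sum_sub_distrib]
  simp_rw [← mul_sub]
  rw [← sum_subset (Icc_subset_Icc_right (by omega : j + 1 ≤ n + 1)) fun i hi hi' => ?_]
  · exact hbal j (mem_Icc.2 hj)
  · simp only [mem_Icc, not_and, not_le] at hi hi'
    rw [fRank_Icc_singleton_of_add_two_le hds hmono hbound hj.1 (by omega) hi.2,
      fRank_Icc_empty hds hmono hbound hi.1 hi.2, sub_self, mul_zero]

theorem exists_nonneg_vecMul_Pmat_eq :
    ∃ ν : Fin (n + 2) → ℝ, (∀ i ∈ Icc 1 (n + 1), 0 ≤ ν i) ∧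
      vecMul ν (Pmat n η ℓ) = fun k => if k = 0 then 1 else 0 := by
  obtain ⟨w, hw, hpos, hcol⟩ := exists_nonneg_weights_fRank_singleton_eq_empty hds hmono hbound
  set tot := ∑ i ∈ Icc 1 (n + 1), w i
  let ν : Fin (n + 2) → ℝ := fun k =>
    if (k : ℕ) = 0 then (∑ i ∈ Icc 1 (n + 1), w i * (fRank n η ℓ (Icc i n) ∅ : ℝ)) / tot
    else w k / tot
  have hν : ∀ i ∈ Icc 1 (n + 1), ν i = w i / tot := fun i hi => by
    have hi' : ((i : Fin (n + 2)) : ℕ) = i := Fin.val_cast_of_lt (by rw [mem_Icc] at hi; omega)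
    simp only [ν, hi', if_neg (by rw [mem_Icc] at hi; omega : i ≠ 0)]
  have hcol' : ∀ S, ∑ i ∈ Icc 1 (n + 1), ν i * (fRank n η ℓ (Icc i n) S : ℝ)
      = (∑ i ∈ Icc 1 (n + 1), w i * (fRank n η ℓ (Icc i n) S : ℝ)) / tot := fun S => by
    rw [sum_congr rfl fun i hi => by rw [hν i hi, div_mul_eq_mul_div], ← sum_div]
  refine ⟨ν, fun i hi => hν i hi ▸ div_nonneg (hw i hi) hpos.le, (vecMul_Pmat_eq_iff ν).2
    ⟨?_, hcol' ∅, fun j hj => (hcol' {j}).trans ?_⟩⟩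
  · rw [sum_congr rfl hν, ← sum_div, div_self hpos.ne']
  · rw [hcol j hj]; rfl

end Dual

theorem stmt12_general (n η : ℕ) (ℓ : ℕ → ℕ → ℕ)
    (hbound : ∀ i ≤ n, ∀ j ≤ n, ℓ i j ≤ η)
    (hds : ℓ 0 0 = 0)
    (hmono : ∀ i j, 1 ≤ i → i ≤ j → j ≤ n → ℓ i 0 ≤ ℓ j 0)
    (hdet : (Pmat n η ℓ).det ≠ 0)
    (μ : Fin (n + 2) → ℝ)
    (hμ : Matrix.vecMul μ (Pmat n η ℓ) = fun k => if k = 0 then 1 else 0) :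
    ∀ S ⊆ Finset.Icc 1 n,
      ∑ i ∈ Finset.Icc 1 (n + 1),
          μ (i : Fin (n + 2)) * (fRank n η ℓ (Finset.Icc i n) S : ℝ)
        ≤ μ 0 := by
  obtain ⟨ν, hν_nonneg, hν⟩ := exists_nonneg_vecMul_Pmat_eq hds hmono hbound
  obtain rfl : μ = ν :=
    vecMul_injective_of_isUnit ((isUnit_iff_isUnit_det _).2 hdet.isUnit) (hμ.trans hν.symm)
  obtain ⟨-, hempty, hsingle⟩ := (vecMul_Pmat_eq_iff μ).1 hμ
  intro S hS
  rw [← hempty]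
  exact le_apply_empty_of_submodular (g := fun S => ∑ i ∈ Icc 1 (n + 1),
      μ i * (fRank n η ℓ (Icc i n) S : ℝ)) (sum_mul_fRank_union_add_inter_le _ _ hν_nonneg)
    (fun j hj => ((hsingle j hj).trans hempty.symm).le) hS

theorem stmt12 (n η : ℕ) (hn : 1 ≤ n) (hη : 1 ≤ η) (ℓ : ℕ → ℕ → ℕ)
    (hbound : ∀ i ≤ n, ∀ j ≤ n, ℓ i j ≤ η)
    (hds : ℓ 0 0 = 0) (hii : ∀ i, 1 ≤ i → i ≤ n → ℓ i i = 0)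
    (hmono : ∀ i j, 1 ≤ i → i ≤ j → j ≤ n → ℓ i 0 ≤ ℓ j 0)
    (hdet : (Pmat n η ℓ).det ≠ 0)
    (μ : Fin (n + 2) → ℝ)
    (hμ : Matrix.vecMul μ (Pmat n η ℓ) = fun k => if k = 0 then 1 else 0) :
    ∀ S ⊆ Finset.Icc 1 n,
      ∑ i ∈ Finset.Icc 1 (n + 1),
          μ (i : Fin (n + 2)) * (fRank n η ℓ (Finset.Icc i n) S : ℝ)
        ≤ μ 0 :=
  stmt12_general n η ℓ hbound hds hmono hdet μ hμ
end

section
/- Let ℓ := max({i ∈ [n] : ℓ_{i,s} = ℓ_{i−1,s}} ∪ {0}). If det P ≠ 0, then μ_j = 0 for every j ∈ {1,…,ℓ}. -/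
open Finset
open Fin.NatCast

/-!
Let `L` be the largest `i ∈ [n]` with `ℓ_{i,s} = ℓ_{i-1,s}` and `1 ≤ j ≤ L`. Outside the rows
`[1, L]`, column `j` of `P` agrees with column `n+1` (the empty state). In row `0` both entries
are `1`. In a row `i > L`, relay `j` is outside the cut `[i:n]`, so the only column block is `s`
and switching `j` on merely deletes the row block `j`. The rank does not change: every nonzero
row of `D^{η-ℓ_{j,s}}` is a row of `D^{η-m}` once `ℓ_{j,s} ≤ m`, and such a block remains, namely
that of relay `L` if `j < L` (monotonicity) and that of `L-1` if `j = L` (the destination `d`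
when `L = 1`, since both `ℓ_{0,s}` and `ℓ_{d,s}` are encoded as `ℓ 0 0`).

Subtracting column `n+1` from the columns `1, …, L` keeps `det P ≠ 0` and makes `P` block
triangular with respect to `[1, L]`, so its diagonal block on `[1, L]` is invertible. On these
columns `μ P = e₀` says that `μ|_{[1,L]}` annihilates that block, hence `μ|_{[1,L]} = 0`.
-/

namespace Matrix

theorem rank_le_rank_of_forall_row_eq_zero_or_mem {K ι₁ ι₂ κ : Type*} [Field K]
    [Fintype ι₁] [Fintype ι₂] [Fintype κ] (A : Matrix ι₁ κ K) (B : Matrix ι₂ κ K)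
    (h : ∀ i, B i = 0 ∨ ∃ i', B i = A i') : B.rank ≤ A.rank := by
  rw [rank_eq_finrank_span_row, rank_eq_finrank_span_row]
  refine Submodule.finrank_mono (Submodule.span_le.mpr ?_)
  rintro _ ⟨i, rfl⟩
  rcases h i with h0 | ⟨i', hi'⟩
  · simp [row, h0]
  · exact Submodule.subset_span ⟨i', hi'.symm⟩

variable {K m : Type*} [Field K] [Fintype m] [DecidableEq m]

theorem eq_zero_of_vecMul_eq_zero_of_twoBlockTriangular {A : Matrix m m K} (hA : A.det ≠ 0)
    (p : m → Prop) [DecidablePred p] (hblock : ∀ i, ¬p i → ∀ j, p j → A i j = 0)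
    {μ : m → K} (hμ : ∀ j, p j → (μ ᵥ* A) j = 0) (i : m) (hi : p i) : μ i = 0 := by
  have hdet : (A.toSquareBlockProp p).det ≠ 0 := by
    intro h
    exact hA (by rw [A.twoBlockTriangular_det p hblock, h, zero_mul])
  have hrestrict : (fun k : {k // p k} => μ k) ᵥ* A.toSquareBlockProp p = 0 := by
    funext j
    have hoff : ∑ k : {k // ¬p k}, μ k * A k j = 0 :=
      Finset.sum_eq_zero fun k _ => by rw [hblock k k.2 j j.2, mul_zero]
    rw [Pi.zero_apply, ← hμ j j.2, vecMul, dotProduct, vecMul, dotProduct,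
      ← Fintype.sum_subtype_add_sum_subtype p, hoff, add_zero]
    rfl
  by_contra hμi
  exact hdet (exists_vecMul_eq_zero_iff.mp
    ⟨_, fun h => hμi (congrFun h ⟨i, hi⟩), hrestrict⟩)

theorem eq_zero_of_vecMul_eq_of_cols_eq_off {M : Matrix m m K} (hM : M.det ≠ 0)
    {T : Finset m} {c : m} (hc : c ∉ T) (hcol : ∀ i ∉ T, ∀ j ∈ T, M i j = M i c)
    {μ : m → K} (hμ : ∀ j ∈ T, (μ ᵥ* M) j = (μ ᵥ* M) c) (i : m) (hi : i ∈ T) : μ i = 0 := by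
  set E : Matrix m m K := 1 + replicateCol Unit (-Pi.single c (1 : K)) *
    replicateRow Unit (fun j => if j ∈ T then (1 : K) else 0)
  have hE : E.det = 1 := by
    simp [E, det_one_add_replicateCol_mul_replicateRow, hc]
  have hvecMulE (w : m → K) (j : m) : (w ᵥ* E) j = if j ∈ T then w j - w c else w j := by
    rw [vecMul_add, vecMul_one, Pi.add_apply]
    split_ifs <;>
      simp [*, vecMul, dotProduct, replicateCol, replicateRow, mul_apply, Pi.single_apply,
        sub_eq_add_neg]
  have hME (k j : m) : (M * E) k j = if j ∈ T then M k j - M k c else M k j :=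
    hvecMulE (M k) j
  refine eq_zero_of_vecMul_eq_zero_of_twoBlockTriangular (A := M * E) (p := (· ∈ T))
    (by rw [det_mul, hE, mul_one]; exact hM) (fun k hk j hj => ?_) (fun j hj => ?_) i hi
  · rw [hME, if_pos hj, hcol k hk j hj, sub_self]
  · rw [← vecMul_vecMul, hvecMulE, if_pos hj, hμ j hj, sub_self]

end Matrix

theorem Dblk_row_eq_zero_or_exists {η m m' : ℕ} (h : m ≤ m') (a : Fin η) :
    Dblk η m a = 0 ∨ ∃ a', Dblk η m a = Dblk η m' a' := by
  by_cases hrow : ∃ b : Fin η, (b : ℕ) < m ∧ (a : ℕ) = b + (η - m)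
  · obtain ⟨b, hbm, hab⟩ := hrow
    refine Or.inr ⟨⟨b + (η - m'), by omega⟩, funext fun q => ?_⟩
    simp only [Dblk, Matrix.of_apply]
    exact if_congr (by omega) rfl rfl
  · simp only [not_exists, not_and] at hrow
    refine Or.inl (funext fun q => ?_)
    simp only [Dblk, Matrix.of_apply, Pi.zero_apply]
    exact if_neg fun hq => hrow q hq.1 hq.2

def transferMatrix (η : ℕ) (ℓ : ℕ → ℕ → ℕ) (R C : Finset ℕ) :
    Matrix (R × Fin η) (C × Fin η) (ZMod 2) :=
  Matrix.of fun p q => Dblk η (ℓ p.1 q.1) p.2 q.2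

theorem fRank_eq_rank_transferMatrix (n η : ℕ) (ℓ : ℕ → ℕ → ℕ) (Ω S : Finset ℕ) :
    fRank n η ℓ Ω S = (transferMatrix η ℓ (rowIdx n Ω S) (colIdx Ω S)).rank := rfl

theorem mem_rowIdx {n r : ℕ} {Ω S : Finset ℕ} :
    r ∈ rowIdx n Ω S ↔ r = 0 ∨ (1 ≤ r ∧ r ≤ n) ∧ r ∉ Ω ∧ r ∉ S := by
  simp [rowIdx, and_assoc]

theorem rank_transferMatrix_le_of_dominated {η : ℕ} {ℓ : ℕ → ℕ → ℕ} {R₁ R₂ C : Finset ℕ}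
    (hC : C ⊆ {0}) (h : ∀ r ∈ R₂, ∃ r' ∈ R₁, ℓ r 0 ≤ ℓ r' 0) :
    (transferMatrix η ℓ R₂ C).rank ≤ (transferMatrix η ℓ R₁ C).rank := by
  have hsrc (R : Finset ℕ) (p : R × Fin η) (q : C × Fin η) :
      transferMatrix η ℓ R C p q = Dblk η (ℓ p.1 0) p.2 q.2 := by
    rw [transferMatrix, Matrix.of_apply, Finset.mem_singleton.mp (hC q.1.2)]
  refine Matrix.rank_le_rank_of_forall_row_eq_zero_or_mem _ _ fun ⟨r, a⟩ => ?_
  obtain ⟨r', hr', hle⟩ := h r r.2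
  rcases Dblk_row_eq_zero_or_exists hle a with h0 | ⟨a', ha'⟩
  · exact Or.inl (funext fun q => by rw [hsrc, h0]; rfl)
  · exact Or.inr ⟨(⟨r', hr'⟩, a'), funext fun q => by rw [hsrc, hsrc, ha']⟩

theorem rank_transferMatrix_eq_of_dominated {η : ℕ} {ℓ : ℕ → ℕ → ℕ} {R₁ R₂ C : Finset ℕ}
    (hC : C ⊆ {0}) (hsub : R₁ ⊆ R₂) (h : ∀ r ∈ R₂, ∃ r' ∈ R₁, ℓ r 0 ≤ ℓ r' 0) :
    (transferMatrix η ℓ R₁ C).rank = (transferMatrix η ℓ R₂ C).rank :=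
  le_antisymm (rank_transferMatrix_le_of_dominated hC fun r hr => ⟨r, hsub hr, le_rfl⟩)
    (rank_transferMatrix_le_of_dominated hC h)

theorem fRank_Icc_singleton_eq_fRank_Icc_empty {n η : ℕ} {ℓ : ℕ → ℕ → ℕ}
    (hmono : ∀ i j, 1 ≤ i → i ≤ j → j ≤ n → ℓ i 0 ≤ ℓ j 0)
    {L j i : ℕ} (hLn : L ≤ n) (hL : ℓ L 0 = ℓ (L - 1) 0) (hjL : j ≤ L) (hLi : L < i) :
    fRank n η ℓ (Icc i n) {j} = fRank n η ℓ (Icc i n) ∅ := by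
  have hcol : colIdx (Icc i n) {j} = colIdx (Icc i n) ∅ := by
    rw [colIdx, colIdx, inter_empty]
    congr 1
    ext x
    simp only [mem_inter, mem_Icc, mem_singleton, notMem_empty, iff_false]
    omega
  rw [fRank_eq_rank_transferMatrix, fRank_eq_rank_transferMatrix, hcol]
  refine rank_transferMatrix_eq_of_dominated (by simp [colIdx]) ?_ fun r hr => ?_
  · exact insert_subset_insert _ (sdiff_subset_sdiff le_rfl (empty_subset _))
  · by_cases hr₁ : r ∈ rowIdx n (Icc i n) {j}
    · exact ⟨r, hr₁, le_rfl⟩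
    · have hrj : r = j ∧ 1 ≤ j := by
        simp only [mem_rowIdx, mem_Icc, mem_singleton, notMem_empty] at hr hr₁
        omega
      obtain ⟨rfl, hr1⟩ := hrj
      rcases hjL.lt_or_eq with hlt | rfl
      · refine ⟨L, ?_, hmono _ _ hr1 hlt.le hLn⟩
        simp only [mem_rowIdx, mem_Icc, mem_singleton]
        omega
      · exact ⟨r - 1, by simp only [mem_rowIdx, mem_Icc, mem_singleton]; omega, hL.le⟩

theorem Pmat_apply_eq_Pmat_apply_last {n η : ℕ} {ℓ : ℕ → ℕ → ℕ}
    (hmono : ∀ i j, 1 ≤ i → i ≤ j → j ≤ n → ℓ i 0 ≤ ℓ j 0)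
    {L : ℕ} (hLn : L ≤ n) (hL : ℓ L 0 = ℓ (L - 1) 0)
    {i k : Fin (n + 2)} (hi : ¬(1 ≤ (i : ℕ) ∧ (i : ℕ) ≤ L)) (hk : 1 ≤ (k : ℕ) ∧ (k : ℕ) ≤ L) :
    Pmat n η ℓ i k = Pmat n η ℓ i (Fin.last (n + 1)) := by
  have hk0 : (k : ℕ) ≠ 0 := by omega
  have hkn : (k : ℕ) ≠ n + 1 := by omega
  simp only [Pmat, Matrix.of_apply, Fin.val_last, if_neg hk0, if_neg hkn,
    if_neg (Nat.succ_ne_zero n)]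
  split_ifs
  · rfl
  · rw [fRank_Icc_singleton_eq_fRank_Icc_empty hmono hLn hL hk.2 (by omega)]

theorem Finset.sup_id_mem_of_ne_zero {s : Finset ℕ} (h : s.sup id ≠ 0) : s.sup id ∈ s := by
  obtain ⟨b, hb, hsup⟩ := s.exists_mem_eq_sup
    (nonempty_iff_ne_empty.mpr fun hs => h (hs ▸ sup_empty)) id
  exact hsup ▸ hb

theorem stmt15_general (n η : ℕ) (ℓ : ℕ → ℕ → ℕ)
    (hmono : ∀ i j, 1 ≤ i → i ≤ j → j ≤ n → ℓ i 0 ≤ ℓ j 0)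
    (hdet : (Pmat n η ℓ).det ≠ 0)
    (μ : Fin (n + 2) → ℝ)
    (hμ : Matrix.vecMul μ (Pmat n η ℓ) = fun k => if k = 0 then 1 else 0) :
    ∀ j : ℕ, 1 ≤ j →
      j ≤ ((Finset.Icc 1 n).filter (fun i => ℓ i 0 = ℓ (i - 1) 0)).sup id →
      μ (j : Fin (n + 2)) = 0 := by
  intro j hj1 hjL
  set L := ((Icc 1 n).filter (fun i => ℓ i 0 = ℓ (i - 1) 0)).sup id
  obtain ⟨⟨-, hLn⟩, hL⟩ : (1 ≤ L ∧ L ≤ n) ∧ ℓ L 0 = ℓ (L - 1) 0 := by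
    simpa only [mem_filter, mem_Icc] using Finset.sup_id_mem_of_ne_zero (by omega : L ≠ 0)
  set T : Finset (Fin (n + 2)) := univ.filter fun k => 1 ≤ (k : ℕ) ∧ (k : ℕ) ≤ L
  have hT (k : Fin (n + 2)) : k ∈ T ↔ 1 ≤ (k : ℕ) ∧ (k : ℕ) ≤ L := by simp [T]
  have hj : ((j : Fin (n + 2)) : ℕ) = j := Fin.val_cast_of_lt (by omega)
  refine Matrix.eq_zero_of_vecMul_eq_of_cols_eq_off hdet (T := T) (c := Fin.last (n + 1))
    (by rw [hT, Fin.val_last]; omega) (fun i hi k hk => ?_) (fun k hk => ?_) _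
    (by rw [hT, hj]; omega)
  · exact Pmat_apply_eq_Pmat_apply_last hmono hLn hL ((hT i).not.mp hi) ((hT k).mp hk)
  · rw [hT] at hk
    simp only [hμ, Fin.ext_iff, Fin.val_zero, Fin.val_last]
    rw [if_neg (by omega), if_neg (by omega)]

theorem stmt15 (n η : ℕ) (hn : 1 ≤ n) (hη : 1 ≤ η) (ℓ : ℕ → ℕ → ℕ)
    (hbound : ∀ i ≤ n, ∀ j ≤ n, ℓ i j ≤ η)
    (hds : ℓ 0 0 = 0) (hii : ∀ i, 1 ≤ i → i ≤ n → ℓ i i = 0)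
    (hmono : ∀ i j, 1 ≤ i → i ≤ j → j ≤ n → ℓ i 0 ≤ ℓ j 0)
    (hdet : (Pmat n η ℓ).det ≠ 0)
    (μ : Fin (n + 2) → ℝ)
    (hμ : Matrix.vecMul μ (Pmat n η ℓ) = fun k => if k = 0 then 1 else 0) :
    ∀ j : ℕ, 1 ≤ j →
      j ≤ ((Finset.Icc 1 n).filter (fun i => ℓ i 0 = ℓ (i - 1) 0)).sup id →
      μ (j : Fin (n + 2)) = 0 :=
  stmt15_general n η ℓ hmono hdet μ hμ
end

section
/- If det P ≠ 0, then for every i ∈ [n], λ*_{{i}}·(ℓ_{i,s} − ℓ_{i−1,s}) = (ℓ_{i,s} − t*) + ∑_{j=i+1}^{n} λ*_{{j}}·(f([i+1:n],{j}) − ℓ_{i,s}). -/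
open Finset
open Fin.NatCast

/-
Fix `i ∈ [n]` and the cut `Ω = [i+1:n]`. For `S = ∅` or `S = {j}` with `j ≤ i` no relay of `Ω`
transmits, so `F_{Ω,S}` has the source as its only column block; a stack of shift blocks
`D^{η-m_k}` has rank `max_k m_k`, hence `f(Ω,S) = max {ℓ_{k,s} : k ∈ {d} ∪ ([1:i] \ S)}`. By
monotonicity this is `ℓ_{i,s}`, except for `S = {i}`, where it is `ℓ_{i-1,s}`. Row `i+1` of
`P·v = e₀` then reads
`t* = ℓ_{i,s}(λ*_∅ + ∑_{j<i} λ*_{{j}}) + ℓ_{i-1,s} λ*_{{i}} + ∑_{j>i} f(Ω,{j}) λ*_{{j}}`,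
and eliminating `λ*_∅ + ∑_{j<i} λ*_{{j}}` with row `0`, which says that the `λ*` sum to `1`,
gives the identity.
-/

def stackDblk {A : Type*} (B : Type*) (η : ℕ) (m : A → ℕ) :
    Matrix (A × Fin η) (B × Fin η) (ZMod 2) :=
  Matrix.of fun p q => Dblk η (m p.1) p.2 q.2

section StackDblk

variable {A B : Type*} [Fintype B] (η : ℕ) (m : A → ℕ)

lemma rank_stackDblk_le [Fintype A] {s : ℕ} (hs : s ≤ η) (hm : ∀ a, m a ≤ s) :
    (stackDblk B η m).rank ≤ s := by
  -- only the first `s` columns of each block are nonzero, and they do not depend on the block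
  set X : Matrix (A × Fin η) (Fin s) (ZMod 2) :=
    Matrix.of fun p c => Dblk η (m p.1) p.2 (Fin.castLE hs c)
  set Y : Matrix (Fin s) (B × Fin η) (ZMod 2) :=
    Matrix.of fun c q => if (c : ℕ) = q.2 then 1 else 0
  have hXY : X * Y = stackDblk B η m := by
    ext p q
    by_cases hq : (q.2 : ℕ) < s
    · rw [Matrix.mul_apply, sum_eq_single ⟨q.2, hq⟩]
      · simp [X, Y, stackDblk]
      · intro c _ hc
        simp [Y, Fin.ext_iff.not.mp hc]
      · simp
    · have : ¬ (q.2 : ℕ) < m p.1 := fun h => hq (h.trans_le (hm p.1))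
      rw [show stackDblk B η m p q = 0 by simp [stackDblk, Dblk, this], Matrix.mul_apply]
      exact sum_eq_zero fun c _ => by simp [Y, show (c : ℕ) ≠ q.2 by omega]
  calc (stackDblk B η m).rank = (X * Y).rank := by rw [hXY]
    _ ≤ X.rank := Matrix.rank_mul_le_left X Y
    _ ≤ s := (Matrix.rank_le_card_width X).trans_eq (Fintype.card_fin s)

lemma le_rank_stackDblk [Nonempty B] (a₀ : A) (h₀ : m a₀ ≤ η) :
    m a₀ ≤ (stackDblk B η m).rank := by
  -- the rows of block `a₀` meet the columns of any block in an identity matrix of size `m a₀`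
  have hId : (stackDblk B η m).submatrix
      (fun c : Fin (m a₀) => (a₀, (⟨c + (η - m a₀), by omega⟩ : Fin η)))
      (fun c => (Classical.arbitrary B, Fin.castLE h₀ c)) = 1 := by
    ext c c'
    simp [stackDblk, Dblk, Matrix.one_apply, Fin.ext_iff]
  calc m a₀ = (1 : Matrix (Fin (m a₀)) (Fin (m a₀)) (ZMod 2)).rank := by simp
    _ ≤ (stackDblk B η m).rank := hId ▸ Matrix.rank_submatrix_le _ _ _

lemma rank_stackDblk [Fintype A] [Nonempty B] (a₀ : A) (hmax : ∀ a, m a ≤ m a₀)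
    (h₀ : m a₀ ≤ η) :
    (stackDblk B η m).rank = m a₀ :=
  (rank_stackDblk_le η m h₀ hmax).antisymm (le_rank_stackDblk η m a₀ h₀)

end StackDblk

lemma fRank_eq_of_inter_eq_empty {n η : ℕ} {ℓ : ℕ → ℕ → ℕ} {Ω S : Finset ℕ}
    (hΩS : Ω ∩ S = ∅) {k : ℕ} (hk : k ∈ rowIdx n Ω S)
    (hmax : ∀ j ∈ rowIdx n Ω S, ℓ j 0 ≤ ℓ k 0) (hkη : ℓ k 0 ≤ η) :
    fRank n η ℓ Ω S = ℓ k 0 := by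
  have hcol : ∀ q : colIdx Ω S, (q : ℕ) = 0 := fun q => by
    simpa [colIdx, hΩS] using q.2
  have : Nonempty (colIdx Ω S) := ⟨⟨0, mem_insert_self _ _⟩⟩
  rw [fRank, ← rank_stackDblk (B := colIdx Ω S) η (fun a : rowIdx n Ω S => ℓ a 0) ⟨k, hk⟩
    (fun a => hmax a a.2) hkη]
  congr 1
  ext p q
  simp [stackDblk, hcol]

lemma rowIdx_Icc_succ {n i : ℕ} (hi : i ≤ n) (S : Finset ℕ) :
    rowIdx n (Icc (i + 1) n) S = insert 0 (Icc 1 i \ S) := by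
  ext x
  simp only [rowIdx, mem_insert, mem_sdiff, mem_Icc]
  by_cases x ∈ S <;> simp only [*, not_true, not_false_eq_true, and_true, and_false]
  all_goals omega

lemma fRank_Icc_succ {n η : ℕ} {ℓ : ℕ → ℕ → ℕ} (hbound : ∀ k ≤ n, ℓ k 0 ≤ η)
    (hds : ℓ 0 0 = 0) (hmono : ∀ i j, 1 ≤ i → i ≤ j → j ≤ n → ℓ i 0 ≤ ℓ j 0)
    {i : ℕ} (hi : i ≤ n) {S : Finset ℕ} (hS : Icc (i + 1) n ∩ S = ∅) {k : ℕ}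
    (hk : IsGreatest ↑(insert 0 (Icc 1 i \ S)) k) :
    fRank n η ℓ (Icc (i + 1) n) S = ℓ k 0 := by
  have hkn : k ≤ n := by
    have := hk.1
    simp only [coe_insert, Set.mem_insert_iff, mem_coe, mem_sdiff, mem_Icc] at this
    omega
  refine fRank_eq_of_inter_eq_empty hS (by simpa [rowIdx_Icc_succ hi] using hk.1)
    (fun j hj => ?_) (hbound k hkn)
  rw [rowIdx_Icc_succ hi] at hj
  obtain rfl | hj0 := Nat.eq_zero_or_pos j
  · exact hds.le.trans (Nat.zero_le _)
  · exact hmono j k hj0 (hk.2 hj) hkn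

lemma sum_fin_add_two {M : Type*} [AddCommMonoid M] (n : ℕ) (g : ℕ → M) :
    ∑ j : Fin (n + 2), g j = g 0 + ∑ j ∈ Icc 1 n, g j + g (n + 1) := by
  rw [Fin.sum_univ_eq_sum_range (fun j => g j), range_eq_Ico, sum_Ico_succ_top (by omega),
    sum_eq_sum_Ico_succ_bot (by omega), Ico_add_one_right_eq_Icc]

lemma mulVec_fin_add_two {R : Type*} [NonUnitalNonAssocSemiring R] {n : ℕ}
    (M : Matrix (Fin (n + 2)) (Fin (n + 2)) R) (v : Fin (n + 2) → R) (r : Fin (n + 2)) :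
    M.mulVec v r
      = M r 0 * v 0 + ∑ j ∈ Icc 1 n, M r j * v j + M r (n + 1 : ℕ) * v (n + 1 : ℕ) := by
  rw [Matrix.mulVec, dotProduct, ← Nat.cast_zero, ← sum_fin_add_two n fun j : ℕ => M r j * v j]
  simp only [Fin.cast_val_eq_self]

lemma Pmat_natCast_apply (n η : ℕ) (ℓ : ℕ → ℕ → ℕ) {r j : ℕ} (hr : r ≤ n + 1)
    (hj : j ≤ n + 1) :
    Pmat n η ℓ r j = if r = 0 then (if j = 0 then 0 else 1) else if j = 0 then 1
      else -(fRank n η ℓ (Icc r n) (if j = n + 1 then ∅ else {j}) : ℝ) := by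
  simp only [Pmat, Matrix.of_apply, Fin.val_cast_of_lt (Nat.lt_succ_of_le hr),
    Fin.val_cast_of_lt (Nat.lt_succ_of_le hj)]

lemma Pmat_mulVec_zero (n η : ℕ) (ℓ : ℕ → ℕ → ℕ) (v : Fin (n + 2) → ℝ) :
    (Pmat n η ℓ).mulVec v 0 = ∑ j ∈ Icc 1 n, v j + v (n + 1 : ℕ) := by
  have hsum : ∑ j ∈ Icc 1 n, Pmat n η ℓ 0 j * v j = ∑ j ∈ Icc 1 n, v j := by
    refine sum_congr rfl fun j hj => ?_
    rw [mem_Icc] at hj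
    rw [← Nat.cast_zero, Pmat_natCast_apply n η ℓ (Nat.zero_le _) (by omega), if_pos rfl,
      if_neg (by omega), one_mul]
  rw [mulVec_fin_add_two, hsum, ← Nat.cast_zero (R := Fin (n + 2)),
    Pmat_natCast_apply n η ℓ (Nat.zero_le _) (Nat.zero_le _),
    Pmat_natCast_apply n η ℓ (Nat.zero_le _) le_rfl]
  simp only [Nat.succ_ne_zero, ↓reduceIte, Nat.cast_zero]
  ring

lemma Pmat_mulVec_of_pos (n η : ℕ) (ℓ : ℕ → ℕ → ℕ) (v : Fin (n + 2) → ℝ) {r : ℕ}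
    (hr : 1 ≤ r) (hrn : r ≤ n + 1) :
    (Pmat n η ℓ).mulVec v r = v 0 - ∑ j ∈ Icc 1 n, (fRank n η ℓ (Icc r n) {j} : ℝ) * v j
      - (fRank n η ℓ (Icc r n) ∅ : ℝ) * v (n + 1 : ℕ) := by
  have hsum : ∑ j ∈ Icc 1 n, Pmat n η ℓ r j * v j
      = -∑ j ∈ Icc 1 n, (fRank n η ℓ (Icc r n) {j} : ℝ) * v j := by
    rw [← sum_neg_distrib]
    refine sum_congr rfl fun j hj => ?_
    rw [mem_Icc] at hj
    rw [Pmat_natCast_apply n η ℓ hrn (by omega), if_neg (by omega), if_neg (by omega),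
      if_neg (by omega), neg_mul]
  rw [mulVec_fin_add_two, hsum, ← Nat.cast_zero (R := Fin (n + 2)),
    Pmat_natCast_apply n η ℓ hrn (Nat.zero_le _), Pmat_natCast_apply n η ℓ hrn le_rfl]
  simp only [show r ≠ 0 by omega, Nat.succ_ne_zero, ↓reduceIte, Nat.cast_zero]
  ring

lemma sum_fRank_Icc_succ_mul {n η : ℕ} {ℓ : ℕ → ℕ → ℕ} (hbound : ∀ k ≤ n, ℓ k 0 ≤ η)
    (hds : ℓ 0 0 = 0) (hmono : ∀ i j, 1 ≤ i → i ≤ j → j ≤ n → ℓ i 0 ≤ ℓ j 0)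
    {i : ℕ} (hi : i ∈ Icc 1 n) (w : ℕ → ℝ) :
    ∑ j ∈ Icc 1 n, (fRank n η ℓ (Icc (i + 1) n) {j} : ℝ) * w j
      = ℓ i 0 * ∑ j ∈ Icc 1 n, w j + w i * ((ℓ (i - 1) 0 : ℝ) - ℓ i 0)
        + ∑ j ∈ Icc (i + 1) n, w j * ((fRank n η ℓ (Icc (i + 1) n) {j} : ℝ) - ℓ i 0) := by
  obtain ⟨hi1, hin⟩ := mem_Icc.mp hi
  set F : ℕ → ℝ := fun j => fRank n η ℓ (Icc (i + 1) n) {j}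
  have hsplit : ∀ g : ℕ → ℝ,
      ∑ j ∈ Icc 1 n, g j = ∑ j ∈ Icc 1 i, g j + ∑ j ∈ Icc (i + 1) n, g j := by
    intro g
    have := sum_Ioc_consecutive g (Nat.zero_le i) hin
    rw [← Icc_add_one_left_eq_Ioc, ← Icc_add_one_left_eq_Ioc, ← Icc_add_one_left_eq_Ioc] at this
    simpa using this.symm
  have hlow : ∀ j ∈ Icc 1 i, j ≠ i → F j = ℓ i 0 := by
    intro j hj hji
    rw [mem_Icc] at hj
    simp only [F]
    rw [fRank_Icc_succ (k := i) hbound hds hmono hin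
      (inter_singleton_of_notMem (by rw [mem_Icc]; omega))
      ⟨by simp; omega, fun x hx => by simp at hx; omega⟩]
  have htop : F i = ℓ (i - 1) 0 := by
    simp only [F]
    rw [fRank_Icc_succ (k := i - 1) hbound hds hmono hin
      (inter_singleton_of_notMem (by rw [mem_Icc]; omega))
      ⟨by simp; omega, fun x hx => by simp at hx; omega⟩]
  calc ∑ j ∈ Icc 1 n, F j * w j
      = ℓ i 0 * ∑ j ∈ Icc 1 n, w j + ∑ j ∈ Icc 1 n, w j * (F j - ℓ i 0) := by
        rw [mul_sum, ← sum_add_distrib]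
        exact sum_congr rfl fun j _ => by ring
    _ = _ := by
        rw [hsplit fun j => w j * (F j - ℓ i 0),
          sum_eq_single_of_mem i (mem_Icc.mpr ⟨hi1, le_rfl⟩)
            fun j hj hji => by rw [hlow j hj hji, sub_self, mul_zero],
          htop, add_assoc]

theorem stmt17_general (n η : ℕ) (ℓ : ℕ → ℕ → ℕ)
    (hbound : ∀ i ≤ n, ∀ j ≤ n, ℓ i j ≤ η)
    (hds : ℓ 0 0 = 0)
    (hmono : ∀ i j, 1 ≤ i → i ≤ j → j ≤ n → ℓ i 0 ≤ ℓ j 0)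
    (v : Fin (n + 2) → ℝ)
    (hv : (Pmat n η ℓ).mulVec v = fun k => if k = 0 then 1 else 0) :
    ∀ i ∈ Finset.Icc 1 n,
      v (i : Fin (n + 2)) * ((ℓ i 0 : ℝ) - (ℓ (i - 1) 0 : ℝ))
        = ((ℓ i 0 : ℝ) - v 0)
          + ∑ j ∈ Finset.Icc (i + 1) n,
              v (j : Fin (n + 2))
                * ((fRank n η ℓ (Finset.Icc (i + 1) n) {j} : ℝ) - (ℓ i 0 : ℝ)) := by
  intro i hi
  obtain ⟨hi1, hin⟩ := mem_Icc.mp hi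
  have hbound₀ : ∀ k ≤ n, ℓ k 0 ≤ η := fun k hk => hbound k hk 0 (Nat.zero_le n)
  have htotal : (Pmat n η ℓ).mulVec v 0 = 1 := by
    rw [hv]
    exact if_pos rfl
  have hcut : (Pmat n η ℓ).mulVec v (i + 1 : ℕ) = 0 := by
    rw [hv]
    refine if_neg fun h => ?_
    rw [Fin.ext_iff, Fin.val_cast_of_lt (by omega)] at h
    simp at h
  have hempty : fRank n η ℓ (Icc (i + 1) n) ∅ = ℓ i 0 :=
    fRank_Icc_succ hbound₀ hds hmono hin (inter_empty _)
      ⟨by simp; omega, fun x hx => by simp at hx; omega⟩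
  rw [Pmat_mulVec_zero] at htotal
  rw [Pmat_mulVec_of_pos n η ℓ v (by omega) (by omega), hempty,
    sum_fRank_Icc_succ_mul hbound₀ hds hmono hi] at hcut
  linear_combination hcut + (ℓ i 0 : ℝ) * htotal

theorem stmt17 (n η : ℕ) (hn : 1 ≤ n) (hη : 1 ≤ η) (ℓ : ℕ → ℕ → ℕ)
    (hbound : ∀ i ≤ n, ∀ j ≤ n, ℓ i j ≤ η)
    (hds : ℓ 0 0 = 0) (hii : ∀ i, 1 ≤ i → i ≤ n → ℓ i i = 0)
    (hmono : ∀ i j, 1 ≤ i → i ≤ j → j ≤ n → ℓ i 0 ≤ ℓ j 0)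
    (hdet : (Pmat n η ℓ).det ≠ 0)
    (v : Fin (n + 2) → ℝ)
    (hv : (Pmat n η ℓ).mulVec v = fun k => if k = 0 then 1 else 0) :
    ∀ i ∈ Finset.Icc 1 n,
      v (i : Fin (n + 2)) * ((ℓ i 0 : ℝ) - (ℓ (i - 1) 0 : ℝ))
        = ((ℓ i 0 : ℝ) - v 0)
          + ∑ j ∈ Finset.Icc (i + 1) n,
              v (j : Fin (n + 2))
                * ((fRank n η ℓ (Finset.Icc (i + 1) n) {j} : ℝ) - (ℓ i 0 : ℝ)) :=
  stmt17_general n η ℓ hbound hds hmono v hv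
end
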